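/- arXiv:2208.11156 — 3 statements merged into one kernel-verified Lean document; each statement's English description precedes it below -/
import Mathlib

section
/- Let P be a finite poset, and let K be a (not necessarily commutative) ring. For each v ∈ P, define the toggle Tᵥ as the partial map on K-labelings f : P̂ → K that replaces the label f(v) by (Σ_{u ⋖ v in P̂} f(u)) · f(v)⁻¹ · (Σ_{u ⋗ v in P̂} f(u)⁻¹)⁻¹ and leaves all other labels unchanged (undefined if any required inverse fails to exist). If v, w ∈ P satisfy neither v ⋖ w nor w ⋖ v, then Tᵥ ∘ T_w = T_w ∘ Tᵥ as partial maps. -/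
open scoped Classical


instance {α : Type*} [Fintype α] : Fintype (WithTop α) :=
  inferInstanceAs (Fintype (Option α))

instance {α : Type*} [Fintype α] : Fintype (WithBot α) :=
  inferInstanceAs (Fintype (Option α))

/-- The poset `P` with an adjoined global minimum `⊥` (called `0` in the paper) and an
adjoined global maximum `⊤` (called `1` in the paper). -/
abbrev PHat (P : Type*) := WithBot (WithTop P)

/-- The embedding of `P` into `PHat P`. -/
def toPHat {P : Type*} (v : P) : PHat P := ((v : WithTop P) : WithBot (WithTop P))

/-- The birational toggle `T_v` at an element `v ∈ P`, as a partial map (modelled via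
`Option`) on `K`-labelings `f : PHat P → K`.  It replaces the label at `v` by
`(∑_{u ⋖ v} f u) * (f v)⁻¹ * (∑_{u ⋗ v} (f u)⁻¹)⁻¹` and leaves all other labels unchanged;
it is undefined (`none`) whenever any of the required inverses fails to exist. -/
noncomputable def toggle {P : Type*} [PartialOrder P] [Fintype P] {K : Type*} [Ring K]
    (v : P) (f : PHat P → K) : Option (PHat P → K) :=
  if IsUnit (f (toPHat v)) ∧ (∀ u : PHat P, toPHat v ⋖ u → IsUnit (f u)) ∧
      IsUnit (∑ u ∈ Finset.univ.filter (fun u : PHat P => toPHat v ⋖ u), Ring.inverse (f u))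
  then some (Function.update f (toPHat v)
      ((∑ u ∈ Finset.univ.filter (fun u : PHat P => u ⋖ toPHat v), f u) *
        Ring.inverse (f (toPHat v)) *
        Ring.inverse
          (∑ u ∈ Finset.univ.filter (fun u : PHat P => toPHat v ⋖ u), Ring.inverse (f u))))
  else none

/-- `toggleList [v₁, …, vₘ] = T_{v₁} ∘ T_{v₂} ∘ ⋯ ∘ T_{vₘ}` as a partial map
(`T_{vₘ}` is applied first); `⊥ = none` propagates through the composition. -/
noncomputable def toggleList {P : Type*} [PartialOrder P] [Fintype P] {K : Type*} [Ring K] :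
    List P → (PHat P → K) → Option (PHat P → K)
  | [], f => some f
  | v :: L, f => (toggleList L f).bind (toggle v)

/-- `rowIter L n` is the `n`-fold iteration `R^n` of birational rowmotion
`R = toggleList L` (for `L` a linear extension of `P`), as a partial map. -/
noncomputable def rowIter {P : Type*} [PartialOrder P] [Fintype P] {K : Type*} [Ring K]
    (L : List P) : ℕ → (PHat P → K) → Option (PHat P → K)
  | 0, f => some f
  | n + 1, f => (toggleList L f).bind (rowIter L n)

/-- A linear extension of a poset `P`: a list of all elements of `P`, each occurring exactly
once, such that `vᵢ < vⱼ` in `P` implies `i < j`. -/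
def IsLinearExtension {P : Type*} [PartialOrder P] (L : List P) : Prop :=
  L.Nodup ∧ (∀ v : P, v ∈ L) ∧ L.Pairwise fun a b => ¬ b < a


/-!
The toggle `T_v` reads the labels only at `v` and at the elements covering or covered by `v`,
and it writes only at `v`. When `v ≠ w` are not adjacent in the Hasse diagram, neither toggle
changes what the other one reads, so both orders write the same two new labels.
-/

open Function

lemma toPHat_injective {P : Type*} : Injective (toPHat (P := P)) := by
  intro a b h
  simpa [toPHat] using h

lemma toPHat_covBy_toPHat_iff {P : Type*} [PartialOrder P] {v w : P} :
    toPHat v ⋖ toPHat w ↔ v ⋖ w := by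
  simp [toPHat]

section Toggle

variable {P : Type*} [PartialOrder P] [Fintype P] {K : Type*} [Ring K]

noncomputable def toggleLabel (v : P) (f : PHat P → K) : Option K :=
  if IsUnit (f (toPHat v)) ∧ (∀ u : PHat P, toPHat v ⋖ u → IsUnit (f u)) ∧
      IsUnit (∑ u ∈ Finset.univ.filter (fun u : PHat P => toPHat v ⋖ u), Ring.inverse (f u))
  then some ((∑ u ∈ Finset.univ.filter (fun u : PHat P => u ⋖ toPHat v), f u) *
        Ring.inverse (f (toPHat v)) *
        Ring.inverse
          (∑ u ∈ Finset.univ.filter (fun u : PHat P => toPHat v ⋖ u), Ring.inverse (f u)))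
  else none

lemma toggle_eq_map_toggleLabel (v : P) (f : PHat P → K) :
    toggle v f = (toggleLabel v f).map (update f (toPHat v)) := by
  unfold toggle toggleLabel
  split_ifs <;> rfl

lemma toggleLabel_congr {v : P} {f g : PHat P → K} (hv : f (toPHat v) = g (toPHat v))
    (hdown : ∀ u, u ⋖ toPHat v → f u = g u) (hup : ∀ u, toPHat v ⋖ u → f u = g u) :
    toggleLabel v f = toggleLabel v g := by
  have hsum_down : ∑ u ∈ Finset.univ.filter (fun u : PHat P => u ⋖ toPHat v), f u =
      ∑ u ∈ Finset.univ.filter (fun u : PHat P => u ⋖ toPHat v), g u :=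
    Finset.sum_congr rfl fun u hu => hdown u (Finset.mem_filter.mp hu).2
  have hsum_up : ∑ u ∈ Finset.univ.filter (fun u : PHat P => toPHat v ⋖ u), Ring.inverse (f u) =
      ∑ u ∈ Finset.univ.filter (fun u : PHat P => toPHat v ⋖ u), Ring.inverse (g u) :=
    Finset.sum_congr rfl fun u hu => by rw [hup u (Finset.mem_filter.mp hu).2]
  have hunits : (∀ u : PHat P, toPHat v ⋖ u → IsUnit (f u)) ↔
      ∀ u : PHat P, toPHat v ⋖ u → IsUnit (g u) :=
    forall_congr' fun u => imp_congr_right fun hu => by rw [hup u hu]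
  simp only [toggleLabel, hv, hsum_down, hsum_up, hunits]

lemma toggleLabel_update_of_ne_of_not_covBy {v w : P} (hne : v ≠ w) (hvw : ¬ v ⋖ w)
    (hwv : ¬ w ⋖ v) (f : PHat P → K) (x : K) :
    toggleLabel v (update f (toPHat w) x) = toggleLabel v f := by
  apply toggleLabel_congr
  · exact update_of_ne (toPHat_injective.ne hne) _ _
  · rintro u hu
    refine update_of_ne ?_ _ _
    rintro rfl
    exact hwv (toPHat_covBy_toPHat_iff.mp hu)
  · rintro u hu
    refine update_of_ne ?_ _ _
    rintro rfl
    exact hvw (toPHat_covBy_toPHat_iff.mp hu)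

end Toggle

/-- If `v, w ∈ P` satisfy neither `v ⋖ w` nor `w ⋖ v`, then the toggles
`T_v` and `T_w` commute: `T_v ∘ T_w = T_w ∘ T_v` as partial maps. -/
theorem stmt8 {P : Type*} [PartialOrder P] [Fintype P] {K : Type*} [Ring K]
    (v w : P) (hvw : ¬ v ⋖ w) (hwv : ¬ w ⋖ v) (f : PHat P → K) :
    (toggle w f).bind (toggle v) = (toggle v f).bind (toggle w) := by
  rcases eq_or_ne v w with rfl | hne
  · rfl
  simp only [toggle_eq_map_toggleLabel, Option.bind_map, comp_def,
    toggleLabel_update_of_ne_of_not_covBy hne hvw hwv,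
    toggleLabel_update_of_ne_of_not_covBy hne.symm hwv hvw]
  rcases toggleLabel v f with _ | y <;> rcases toggleLabel w f with _ | x
  all_goals simp only [Option.bind_none, Option.bind_some, Option.map_none, Option.map_some]
  rw [update_comm (toPHat_injective.ne hne)]
end

section
/- Let P be a finite poset, K a ring, and R the birational rowmotion partial map defined as the composition T_{v₁} ∘ T_{v₂} ∘ ⋯ ∘ T_{vₘ} for any linear extension (v₁, …, vₘ) of P. Then this composition is independent of the choice of linear extension (v₁, …, vₘ). -/
/-
Toggles at incomparable elements commute, because `T_v` reads the labels only at `v` and at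
the elements covering or covered by `v`, and changes only the label at `v`. Two linear
extensions are permutations of each other in which every pair of elements occurring in
opposite orders is incomparable, and such a permutation can be undone one element at a time
by moving the first element of one list to the front of the other past incomparable ones.
-/

open scoped Classical


namespace List

variable {α β : Type*}

theorem foldr_append_cons_of_commute {f : α → β → β} {a : α} {X : List α} (Y : List α) (z : β)
    (hX : ∀ x ∈ X, ∀ z, f x (f a z) = f a (f x z)) :
    foldr f z (X ++ a :: Y) = f a (foldr f z (X ++ Y)) := by
  induction X with
  | nil => rfl
  | cons x X ih =>
    simp only [cons_append, foldr_cons]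
    rw [ih fun y hy => hX y (mem_cons_of_mem x hy), hX x mem_cons_self]

theorem Perm.foldr_eq_of_pairwise {R : α → α → Prop} {f : α → β → β}
    (hcomm : ∀ a b, R a b → R b a → ∀ z, f a (f b z) = f b (f a z))
    {l₁ l₂ : List α} (hp : l₁ ~ l₂) (h₁ : l₁.Pairwise R) (h₂ : l₂.Pairwise R) (z : β) :
    foldr f z l₁ = foldr f z l₂ := by
  induction l₁ generalizing l₂ with
  | nil => rw [hp.nil_eq]
  | cons a T ih =>
    obtain ⟨X, Y, rfl⟩ := append_of_mem (hp.subset mem_cons_self)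
    have hT : T ~ X ++ Y := (perm_cons a).mp (hp.trans perm_middle)
    have hX : ∀ x ∈ X, ∀ z, f x (f a z) = f a (f x z) := by
      intro x hx z
      obtain rfl | hxT := mem_cons.mp (hp.mem_iff.mpr (mem_append_left _ hx))
      · rfl
      · exact hcomm x a ((pairwise_append.mp h₂).2.2 x hx a mem_cons_self)
          (rel_of_pairwise_cons h₁ hxT) z
    rw [foldr_append_cons_of_commute Y z hX, foldr_cons,
      ih hT h₁.of_cons (h₂.sublist ((sublist_cons_self a Y).append_left X))]

end List

section PHat

variable {P : Type*}

theorem toPHat_injective_s9 : Function.Injective (toPHat : P → PHat P) :=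
  WithBot.coe_injective.comp WithTop.coe_injective

theorem toPHat_lt_toPHat [LT P] {a b : P} : toPHat a < toPHat b ↔ a < b := by
  simp [toPHat]

theorem ne_toPHat_of_incomparable [Preorder P] {a b : P} (hab : ¬ a < b) (hba : ¬ b < a)
    (hne : a ≠ b) {u : PHat P} (hu : u = toPHat a ∨ toPHat a ⋖ u ∨ u ⋖ toPHat a) :
    u ≠ toPHat b := by
  rintro rfl
  rcases hu with h | h | h
  · exact hne (toPHat_injective_s9 h.symm)
  · exact hab (toPHat_lt_toPHat.mp h.lt)
  · exact hba (toPHat_lt_toPHat.mp h.lt)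

end PHat

section Toggle

variable {P : Type*} [PartialOrder P] [Fintype P] {K : Type*} [Ring K]

def toggleDefined (v : P) (f : PHat P → K) : Prop :=
  IsUnit (f (toPHat v)) ∧ (∀ u : PHat P, toPHat v ⋖ u → IsUnit (f u)) ∧
    IsUnit (∑ u ∈ Finset.univ.filter (fun u : PHat P => toPHat v ⋖ u), Ring.inverse (f u))

noncomputable def toggleValue (v : P) (f : PHat P → K) : K :=
  (∑ u ∈ Finset.univ.filter (fun u : PHat P => u ⋖ toPHat v), f u) *
    Ring.inverse (f (toPHat v)) *
    Ring.inverse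
      (∑ u ∈ Finset.univ.filter (fun u : PHat P => toPHat v ⋖ u), Ring.inverse (f u))

theorem toggle_eq_ite (v : P) (f : PHat P → K) :
    toggle v f = if toggleDefined v f
      then some (Function.update f (toPHat v) (toggleValue v f)) else none := by
  unfold toggle toggleDefined toggleValue
  congr

theorem sum_inverse_upperCovers_congr {v : P} {f g : PHat P → K}
    (h : ∀ u, toPHat v ⋖ u → f u = g u) :
    ∑ u ∈ Finset.univ.filter (fun u : PHat P => toPHat v ⋖ u), Ring.inverse (f u) =
      ∑ u ∈ Finset.univ.filter (fun u : PHat P => toPHat v ⋖ u), Ring.inverse (g u) :=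
  Finset.sum_congr rfl fun u hu => by rw [h u (Finset.mem_filter.mp hu).2]

theorem toggleDefined_congr {v : P} {f g : PHat P → K}
    (h : ∀ u, u = toPHat v ∨ toPHat v ⋖ u ∨ u ⋖ toPHat v → f u = g u) :
    toggleDefined v f ↔ toggleDefined v g := by
  have hup : ∀ u, toPHat v ⋖ u → f u = g u := fun u hu => h u (Or.inr (Or.inl hu))
  unfold toggleDefined
  rw [h _ (Or.inl rfl), sum_inverse_upperCovers_congr hup]
  exact and_congr_right' (and_congr_left' (forall₂_congr fun u hu => by rw [hup u hu]))

theorem toggleValue_congr {v : P} {f g : PHat P → K}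
    (h : ∀ u, u = toPHat v ∨ toPHat v ⋖ u ∨ u ⋖ toPHat v → f u = g u) :
    toggleValue v f = toggleValue v g := by
  unfold toggleValue
  rw [h _ (Or.inl rfl), sum_inverse_upperCovers_congr fun u hu => h u (Or.inr (Or.inl hu)),
    Finset.sum_congr rfl fun u hu => h u (Or.inr (Or.inr (Finset.mem_filter.mp hu).2))]

theorem toggle_update_of_incomparable {a b : P} (hab : ¬ a < b) (hba : ¬ b < a) (hne : a ≠ b)
    (f : PHat P → K) (c : K) :
    toggle a (Function.update f (toPHat b) c) =
      (toggle a f).map (Function.update · (toPHat b) c) := by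
  have hagree : ∀ u, u = toPHat a ∨ toPHat a ⋖ u ∨ u ⋖ toPHat a →
      Function.update f (toPHat b) c u = f u :=
    fun u hu => Function.update_of_ne (ne_toPHat_of_incomparable hab hba hne hu) _ _
  rw [toggle_eq_ite, toggle_eq_ite, toggleDefined_congr hagree, toggleValue_congr hagree]
  split_ifs
  · rw [Option.map_some, Function.update_comm (toPHat_injective_s9.ne hne.symm)]
  · rfl

theorem toggle_bind_toggle_comm {a b : P} (hab : ¬ a < b) (hba : ¬ b < a)
    (o : Option (PHat P → K)) :
    (o.bind (toggle b)).bind (toggle a) = (o.bind (toggle a)).bind (toggle b) := by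
  obtain rfl | hne := eq_or_ne a b
  · rfl
  rcases o with _ | f
  · rfl
  show (toggle b f).bind (toggle a) = (toggle a f).bind (toggle b)
  by_cases ha : toggleDefined a f <;> by_cases hb : toggleDefined b f <;>
    simp [toggle_eq_ite a f, toggle_eq_ite b f, ha, hb,
      toggle_update_of_incomparable hab hba hne, toggle_update_of_incomparable hba hab hne.symm,
      Function.update_comm (toPHat_injective_s9.ne hne)]

theorem toggleList_eq_foldr (L : List P) (f : PHat P → K) :
    toggleList L f = L.foldr (fun v o => o.bind (toggle v)) (some f) := by
  induction L with
  | nil => rfl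
  | cons v L ih => rw [List.foldr_cons, ← ih]; rfl

theorem toggleList_eq_of_perm {L₁ L₂ : List P} (hp : L₁.Perm L₂)
    (h₁ : L₁.Pairwise fun a b => ¬ b < a) (h₂ : L₂.Pairwise fun a b => ¬ b < a)
    (f : PHat P → K) :
    toggleList L₁ f = toggleList L₂ f := by
  rw [toggleList_eq_foldr, toggleList_eq_foldr]
  exact hp.foldr_eq_of_pairwise (fun a b hba hab => toggle_bind_toggle_comm hab hba) h₁ h₂ _

end Toggle

theorem IsLinearExtension.perm {P : Type*} [PartialOrder P] {L₁ L₂ : List P}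
    (h₁ : IsLinearExtension L₁) (h₂ : IsLinearExtension L₂) : L₁.Perm L₂ :=
  (List.perm_ext_iff_of_nodup h₁.1 h₂.1).mpr fun v => iff_of_true (h₁.2.1 v) (h₂.2.1 v)

/-- Birational rowmotion `T_{v₁} ∘ ⋯ ∘ T_{vₘ}` does not depend on the choice
of the linear extension `(v₁, …, vₘ)` of `P`. -/
theorem stmt9 {P : Type*} [PartialOrder P] [Fintype P] {K : Type*} [Ring K]
    (L₁ L₂ : List P) (h₁ : IsLinearExtension L₁) (h₂ : IsLinearExtension L₂)
    (f : PHat P → K) :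
    toggleList L₁ f = toggleList L₂ f :=
  toggleList_eq_of_perm (h₁.perm h₂) h₁.2.2 h₂.2.2 f
end

section
/- Let P be a finite poset, K a ring, and f a K-labeling of P with Rf ≠ ⊥, where R is birational rowmotion. Then for each v ∈ P, (Rf)(v) = (Σ_{u ⋖ v in P̂} f(u)) · f(v)⁻¹ · (Σ_{u ⋗ v in P̂} (Rf)(u)⁻¹)⁻¹. -/
open scoped Classical


/-
The toggle at `v` reads only the labels at `v` and at its covers. In a linear extension
`L = L₁ ++ v :: L₂`, the toggles `L₂` applied before `T_v` are at elements not below `v`, so they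
leave the labels at `v` and its lower covers as in `f`; the toggles `L₁` applied after `T_v` are at
elements not above `v`, so `R f` still carries at `v` and at its upper covers the labels present
right after `T_v`. Substituting these into the toggle formula gives the claim.
-/

section Toggle

variable {P : Type*} [PartialOrder P]

lemma toPHat_le_toPHat {a b : P} : toPHat a ≤ toPHat b ↔ a ≤ b := by
  simp [toPHat]

lemma IsLinearExtension.exists_eq_append_cons {L : List P} (hL : IsLinearExtension L) (v : P) :
    ∃ L₁ L₂, L = L₁ ++ v :: L₂ ∧ (∀ w ∈ L₁, ¬ v ≤ w) ∧ ∀ w ∈ L₂, ¬ w ≤ v := by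
  obtain ⟨hnd, hmem, hpw⟩ := hL
  obtain ⟨L₁, L₂, rfl⟩ := List.append_of_mem (hmem v)
  obtain ⟨-, hnd₂, hdisj⟩ := List.nodup_append.mp hnd
  obtain ⟨-, hpw₂, hrel⟩ := List.pairwise_append.mp hpw
  refine ⟨L₁, L₂, rfl, fun w hw hvw => ?_, fun w hw hwv => ?_⟩
  · rcases hvw.eq_or_lt with rfl | hlt
    · exact hdisj v hw v List.mem_cons_self rfl
    · exact hrel w hw v List.mem_cons_self hlt
  · rcases hwv.eq_or_lt with rfl | hlt
    · exact (List.nodup_cons.mp hnd₂).1 hw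
    · exact (List.pairwise_cons.mp hpw₂).1 w hw hlt

variable [Fintype P] {K : Type*} [Ring K]

lemma toggle_eq_some {v : P} {f h : PHat P → K} (hh : toggle v f = some h) :
    (IsUnit (f (toPHat v)) ∧ (∀ u : PHat P, toPHat v ⋖ u → IsUnit (f u)) ∧
      IsUnit (∑ u ∈ Finset.univ.filter (fun u : PHat P => toPHat v ⋖ u), Ring.inverse (f u))) ∧
    h = Function.update f (toPHat v)
      ((∑ u ∈ Finset.univ.filter (fun u : PHat P => u ⋖ toPHat v), f u) *
        Ring.inverse (f (toPHat v)) *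
        Ring.inverse
          (∑ u ∈ Finset.univ.filter (fun u : PHat P => toPHat v ⋖ u), Ring.inverse (f u))) := by
  rw [toggle] at hh
  split_ifs at hh with hc
  exact ⟨hc, (Option.some_inj.mp hh).symm⟩

lemma toggleList_append (A B : List P) (f : PHat P → K) :
    toggleList (A ++ B) f = (toggleList B f).bind (toggleList A) := by
  induction A with
  | nil => simp [toggleList]
  | cons a A ih => simp only [List.cons_append, toggleList, ih, Option.bind_assoc]

lemma toggleList_apply_of_forall_ne {M : List P} {f h : PHat P → K}
    (hh : toggleList M f = some h) {u : PHat P} (hu : ∀ w ∈ M, toPHat w ≠ u) : h u = f u := by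
  induction M generalizing h with
  | nil => exact congrFun (Option.some_inj.mp hh).symm u
  | cons w M ih =>
    obtain ⟨h₁, hh₁, htog⟩ := Option.bind_eq_some_iff.mp hh
    obtain ⟨-, rfl⟩ := toggle_eq_some htog
    rw [Function.update_of_ne (hu w List.mem_cons_self).symm]
    exact ih hh₁ fun w' hw' => hu w' (List.mem_cons_of_mem w hw')

lemma toggleList_apply_of_le {M : List P} {v : P} (hM : ∀ w ∈ M, ¬ w ≤ v)
    {f h : PHat P → K} (hh : toggleList M f = some h) {u : PHat P} (hu : u ≤ toPHat v) :
    h u = f u :=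
  toggleList_apply_of_forall_ne hh fun w hw hwu =>
    hM w hw (toPHat_le_toPHat.mp (hwu ▸ hu))

lemma toggleList_apply_of_ge {M : List P} {v : P} (hM : ∀ w ∈ M, ¬ v ≤ w)
    {f h : PHat P → K} (hh : toggleList M f = some h) {u : PHat P} (hu : toPHat v ≤ u) :
    h u = f u :=
  toggleList_apply_of_forall_ne hh fun w hw hwu =>
    hM w hw (toPHat_le_toPHat.mp (hwu ▸ hu))

end Toggle

/-- If `R f ≠ ⊥` and `v ∈ P`, then all the inverses in the formula below
exist and `(R f)(v) = (∑_{u ⋖ v} f u) * (f v)⁻¹ * (∑_{u ⋗ v} ((R f) u)⁻¹)⁻¹`. -/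
theorem stmt11 {P : Type*} [PartialOrder P] [Fintype P] {K : Type*} [Ring K]
    (L : List P) (hL : IsLinearExtension L) (f g : PHat P → K)
    (hfg : toggleList L f = some g) (v : P) :
    IsUnit (f (toPHat v)) ∧
    (∀ u : PHat P, toPHat v ⋖ u → IsUnit (g u)) ∧
    IsUnit (∑ u ∈ Finset.univ.filter (fun u : PHat P => toPHat v ⋖ u), Ring.inverse (g u)) ∧
    g (toPHat v) =
      (∑ u ∈ Finset.univ.filter (fun u : PHat P => u ⋖ toPHat v), f u) *
        Ring.inverse (f (toPHat v)) *
        Ring.inverse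
          (∑ u ∈ Finset.univ.filter (fun u : PHat P => toPHat v ⋖ u), Ring.inverse (g u)) := by
  obtain ⟨L₁, L₂, rfl, hL₁, hL₂⟩ := hL.exists_eq_append_cons v
  rw [toggleList_append, toggleList] at hfg
  obtain ⟨h, hh, hg⟩ := Option.bind_eq_some_iff.mp hfg
  obtain ⟨h₀, hh₀, htog⟩ := Option.bind_eq_some_iff.mp hh
  obtain ⟨⟨hunit_v, hunit_up, hunit_sum⟩, rfl⟩ := toggle_eq_some htog
  have hbelow (u : PHat P) (hu : u ≤ toPHat v) : h₀ u = f u :=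
    toggleList_apply_of_le hL₂ hh₀ hu
  have hcover (u : PHat P) (hu : toPHat v ⋖ u) : g u = h₀ u := by
    rw [toggleList_apply_of_ge hL₁ hg hu.le, Function.update_of_ne hu.ne']
  have hsum_up : ∑ u ∈ Finset.univ.filter (fun u : PHat P => toPHat v ⋖ u), Ring.inverse (g u) =
      ∑ u ∈ Finset.univ.filter (fun u : PHat P => toPHat v ⋖ u), Ring.inverse (h₀ u) :=
    Finset.sum_congr rfl fun u hu => by rw [hcover u (Finset.mem_filter.mp hu).2]
  have hsum_down : ∑ u ∈ Finset.univ.filter (fun u : PHat P => u ⋖ toPHat v), h₀ u =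
      ∑ u ∈ Finset.univ.filter (fun u : PHat P => u ⋖ toPHat v), f u :=
    Finset.sum_congr rfl fun u hu => hbelow u (Finset.mem_filter.mp hu).2.le
  refine ⟨hbelow _ le_rfl ▸ hunit_v, fun u hu => hcover u hu ▸ hunit_up u hu,
    hsum_up ▸ hunit_sum, ?_⟩
  rw [toggleList_apply_of_ge hL₁ hg le_rfl, Function.update_self, hsum_up, hsum_down,
    hbelow _ le_rfl]
end
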